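/- arXiv:2202.10216 — 5 statements merged into one kernel-verified Lean document; each statement's English description precedes it below -/
import Mathlib

section
/- Let $G_1, G_2$ be groups, $\phi: G_1 \to G_2$ a homomorphism, and $\mathcal{A} = \{a_1, \dots, a_k\} \subset G_1$ a totally symmetric set, i.e., for every permutation $\sigma \in \Sigma_k$ there exists $g_\sigma \in G_1$ with $g_\sigma a_i g_\sigma^{-1} = a_{\sigma(i)}$ for all $i$. Then $\phi(\mathcal{A})$ is either a totally symmetric set of cardinality $k$ in $G_2$, or a singleton. In particular, if $\phi(a_i) = \phi(a_j)$ for some $i \neq j$, then $\phi(a_1) = \phi(a_2) = \cdots = \phi(a_k)$. -/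
/-- Persistence of totally symmetric sets under group homomorphisms. -/
theorem stmt0 {G₁ G₂ : Type*} [Group G₁] [Group G₂] (φ : G₁ →* G₂) {k : ℕ}
    (a : Fin k → G₁) (ha : Function.Injective a)
    (hts : ∀ σ : Equiv.Perm (Fin k), ∃ g : G₁, ∀ i, g * a i * g⁻¹ = a (σ i)) :
    ((Function.Injective (fun i => φ (a i)) ∧
      ∀ σ : Equiv.Perm (Fin k), ∃ g : G₂, ∀ i, g * φ (a i) * g⁻¹ = φ (a (σ i))) ∨
      (∀ i j, φ (a i) = φ (a j))) ∧
    ((∃ i j, i ≠ j ∧ φ (a i) = φ (a j)) → ∀ i j, φ (a i) = φ (a j)) := by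
  have key : (∃ i j, i ≠ j ∧ φ (a i) = φ (a j)) → ∀ i j, φ (a i) = φ (a j) := by
    rintro ⟨i, j, hij, hφ⟩ i' j'
    rcases eq_or_ne i' j' with h | h
    · rw [h]
    · set σ₁ := Equiv.swap i i' with hσ₁
      set σ := σ₁.trans (Equiv.swap (σ₁ j) j') with hσ
      have hσi : σ i = i' := by
        simp only [hσ, Equiv.trans_apply, hσ₁, Equiv.swap_apply_left]
        apply Equiv.swap_apply_of_ne_of_ne
        · exact fun e => hij (σ₁.injective (by simp [hσ₁, Equiv.swap_apply_left, e.symm]))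
        · exact h
      have hσj : σ j = j' := by
        simp [hσ, Equiv.trans_apply, Equiv.swap_apply_left]
      obtain ⟨g, hg⟩ := hts σ
      have e1 : φ (a i') = φ g * φ (a i) * (φ g)⁻¹ := by
        rw [← hσi, ← hg i]; simp
      have e2 : φ (a j') = φ g * φ (a j) * (φ g)⁻¹ := by
        rw [← hσj, ← hg j]; simp
      rw [e1, e2, hφ]
  refine ⟨?_, key⟩
  by_cases hinj : Function.Injective (fun i => φ (a i))
  · left
    refine ⟨hinj, fun σ => ?_⟩
    obtain ⟨g, hg⟩ := hts σ
    exact ⟨φ g, fun i => by rw [← hg i]; simp⟩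
  · right
    apply key
    simp only [Function.Injective, not_forall] at hinj
    obtain ⟨i, j, hφ, hne⟩ := hinj
    exact ⟨i, j, hne, hφ⟩
end

section
/- Let $\mathcal{A} = \{A_1, \dots, A_k\} \subset \mathrm{End}(V)$ be an irreducible commutative totally symmetric set (for some realization map $\rho$). Then the $A_i$ are simultaneously diagonalizable. -/
/-- A commuting family of endomorphisms of a nontrivial finite-dimensional
complex vector space has a common eigenvector. -/
theorem commonEigenvector : ∀ (k : ℕ) {V : Type*} [AddCommGroup V] [Module ℂ V]
    [FiniteDimensional ℂ V] [Nontrivial V] (A : Fin k → Module.End ℂ V),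
    (∀ i j, Commute (A i) (A j)) →
    ∃ v : V, v ≠ 0 ∧ ∀ i, ∃ μ : ℂ, A i v = μ • v := by
  intro k
  induction k with
  | zero =>
    intro V _ _ _ _ A _
    obtain ⟨v, hv⟩ := exists_ne (0 : V)
    exact ⟨v, hv, fun i => i.elim0⟩
  | succ n ih =>
    intro V _ _ _ _ A hcomm
    obtain ⟨μ, hμ⟩ := Module.End.exists_eigenvalue (A 0)
    set E := Module.End.eigenspace (A 0) μ with hE
    haveI : Nontrivial E := Submodule.nontrivial_iff_ne_bot.mpr hμ
    have hmap : ∀ i : Fin n, Set.MapsTo (A i.succ) E E := by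
      intro i v hv
      have hv' : A 0 v = μ • v := Module.End.mem_eigenspace_iff.mp hv
      have : A 0 (A i.succ v) = μ • (A i.succ v) := by
        have := LinearMap.congr_fun (hcomm 0 i.succ) v
        simp only [Module.End.mul_apply] at this
        rw [this, hv', map_smul]
      exact Module.End.mem_eigenspace_iff.mpr this
    let B : Fin n → Module.End ℂ E := fun i => (A i.succ).restrict (hmap i)
    have hBcomm : ∀ i j, Commute (B i) (B j) := by
      intro i j
      ext v
      have := LinearMap.congr_fun (hcomm i.succ j.succ) (v : V)
      simp only [Module.End.mul_apply] at this
      exact this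
    obtain ⟨w, hw, hwe⟩ := ih B hBcomm
    refine ⟨(w : V), by simpa using hw, ?_⟩
    intro i
    refine Fin.cases ?_ ?_ i
    · exact ⟨μ, Module.End.mem_eigenspace_iff.mp w.2⟩
    · intro j
      obtain ⟨ν, hν⟩ := hwe j
      exact ⟨ν, congrArg (Subtype.val) hν⟩

/-- An irreducible commutative totally symmetric set is simultaneously diagonalizable. -/
theorem stmt5 {V : Type*} [AddCommGroup V] [Module ℂ V] [FiniteDimensional ℂ V]
    {k : ℕ} (A : Fin k → Module.End ℂ V)
    (hcomm : ∀ i j, Commute (A i) (A j))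
    (ρ : Equiv.Perm (Fin k) → (V ≃ₗ[ℂ] V))
    (hρ : ∀ (σ : Equiv.Perm (Fin k)) (i : Fin k) (v : V),
      ρ σ (A i v) = A (σ i) (ρ σ v))
    (hirr : ∀ W : Submodule ℂ V,
      (∀ i, ∀ v ∈ W, A i v ∈ W) → (∀ σ, ∀ v ∈ W, ρ σ v ∈ W) → W = ⊥ ∨ W = ⊤) :
    ∃ (ι : Type) (b : Module.Basis ι ℂ V),
      ∀ (i : Fin k) (x : ι), ∃ μ : ℂ, A i (b x) = μ • b x := by
  classical
  -- the set of simultaneous eigenvectors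
  set S : Set V := {v : V | ∀ i, ∃ μ : ℂ, A i v = μ • v} with hS
  -- key claim: S spans V
  have hspan : Submodule.span ℂ S = ⊤ := by
    -- the sum of joint eigenspaces
    set W : Submodule ℂ V := ⨆ χ : Fin k → ℂ, ⨅ i, Module.End.eigenspace (A i) (χ i)
      with hWdef
    have hWle : W ≤ Submodule.span ℂ S := by
      refine iSup_le fun χ => ?_
      intro v hv
      apply Submodule.subset_span
      intro i
      exact ⟨χ i, Module.End.mem_eigenspace_iff.mp (Submodule.mem_iInf _ |>.mp hv i)⟩
    have hWtop : W = ⊤ := by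
      rcases subsingleton_or_nontrivial V with hV | hV
      · exact Subsingleton.elim _ _
      -- W is invariant under the A i
      have hA : ∀ i, ∀ v ∈ W, A i v ∈ W := by
        intro j v hv
        have : W ≤ Submodule.comap (A j) W := by
          refine iSup_le fun χ => ?_
          intro v hv
          have hv' : A j v = χ j • v := Module.End.mem_eigenspace_iff.mp
            (Submodule.mem_iInf _ |>.mp hv j)
          simp only [Submodule.mem_comap, hv']
          exact Submodule.smul_mem _ _ (le_iSup (fun χ : Fin k → ℂ =>
            ⨅ i, Module.End.eigenspace (A i) (χ i)) χ hv)
        exact this hv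
      -- W is invariant under the ρ σ
      have hR : ∀ σ, ∀ v ∈ W, ρ σ v ∈ W := by
        intro σ v hv
        have : W ≤ Submodule.comap (ρ σ : V →ₗ[ℂ] V) W := by
          refine iSup_le fun χ => ?_
          intro v hv
          simp only [Submodule.mem_comap, LinearEquiv.coe_coe]
          have hmem : ρ σ v ∈ ⨅ i, Module.End.eigenspace (A i) ((χ ∘ σ.symm) i) := by
            refine Submodule.mem_iInf _ |>.mpr fun i => ?_
            refine Module.End.mem_eigenspace_iff.mpr ?_
            have h1 : A (σ⁻¹ i) v = χ (σ⁻¹ i) • v := Module.End.mem_eigenspace_iff.mp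
              (Submodule.mem_iInf _ |>.mp hv (σ⁻¹ i))
            have h2 := hρ σ (σ⁻¹ i) v
            rw [h1, map_smul] at h2
            simpa [Equiv.Perm.coe_inv] using h2.symm
          exact le_iSup (fun χ : Fin k → ℂ =>
            ⨅ i, Module.End.eigenspace (A i) (χ i)) (χ ∘ σ.symm) hmem
        exact this hv
      rcases hirr W hA hR with hbot | htop
      · -- impossible: there is a common eigenvector
        exfalso
        obtain ⟨v, hv0, hve⟩ := commonEigenvector k A hcomm
        choose χ hχ using hve
        have : v ∈ W := le_iSup (fun χ : Fin k → ℂ =>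
          ⨅ i, Module.End.eigenspace (A i) (χ i)) χ
          (Submodule.mem_iInf _ |>.mpr fun i => Module.End.mem_eigenspace_iff.mpr (hχ i))
        rw [hbot] at this
        exact hv0 (by simpa using this)
      · exact htop
    exact top_unique (hWtop ▸ hWle)
  -- extract a basis from S
  obtain ⟨b, hbS, hbspan, hbli⟩ := exists_linearIndependent ℂ S
  rw [hspan] at hbspan
  haveI : Finite b := hbli.setFinite
  haveI : Fintype b := Fintype.ofFinite _
  let bas : Module.Basis b ℂ V := Module.Basis.mk hbli (by rw [Subtype.range_coe, hbspan])
  let e : b ≃ Fin (Fintype.card b) := Fintype.equivFin b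
  refine ⟨Fin (Fintype.card b), bas.reindex e, fun i x => ?_⟩
  have hmem : ((e.symm x : b) : V) ∈ S := hbS (e.symm x).2
  obtain ⟨μ, hμ⟩ := hmem i
  refine ⟨μ, ?_⟩
  rw [Module.Basis.reindex_apply]
  rw [Module.Basis.mk_apply] at *
  simpa [bas, Module.Basis.mk_apply] using hμ
end

section
/- Let $\mathcal{A} = \{A_1,\dots,A_k\} \subset \mathrm{End}(V)$ be a commutative totally symmetric set with realization map $\rho$, let $\mu \in \mathbb{C}$ be an eigenvalue of $\mathcal{A}$, and let $S \subseteq [k]$. Then the restrictions $\{A_i|_{E_\mu^S} : i \notin S\}$ form a totally symmetric set of endomorphisms of $E_\mu^S = \bigcap_{i \in S}\ker(A_i - \mu I)$, with realization map obtained by restricting $\rho(\tilde\sigma)$ for permutations $\tilde\sigma$ fixing $S$ pointwise. -/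
/-- Restriction of a commutative totally symmetric set to a `j`-fold eigenspace is
totally symmetric. -/
theorem stmt7 {V : Type*} [AddCommGroup V] [Module ℂ V] [FiniteDimensional ℂ V]
    {k : ℕ} (A : Fin k → Module.End ℂ V)
    (hcomm : ∀ i j, Commute (A i) (A j))
    (ρ : Equiv.Perm (Fin k) → (V ≃ₗ[ℂ] V))
    (hρ : ∀ (σ : Equiv.Perm (Fin k)) (i : Fin k) (v : V),
      ρ σ (A i v) = A (σ i) (ρ σ v))
    (μ : ℂ) (hμ : ∃ (i : Fin k) (v : V), v ≠ 0 ∧ A i v = μ • v)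
    (S : Finset (Fin k))
    (E : Submodule ℂ V) (hE : E = ⨅ i ∈ S, LinearMap.ker (A i - μ • 1)) :
    (∀ (i : Fin k), ∀ v ∈ E, A i v ∈ E) ∧
    (∀ τ : Equiv.Perm (Fin k), (∀ s ∈ S, τ s = s) → ∀ v ∈ E, ρ τ v ∈ E) ∧
    (∀ τ : Equiv.Perm (Fin k), (∀ s ∈ S, τ s = s) →
      ∀ i ∉ S, ∀ v ∈ E, ρ τ (A i v) = A (τ i) (ρ τ v)) := by
  have hmem : ∀ v : V, v ∈ E ↔ ∀ s ∈ S, A s v = μ • v := by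
    intro v
    subst hE
    simp only [Submodule.mem_iInf, LinearMap.mem_ker, LinearMap.sub_apply,
      LinearMap.smul_apply, Module.End.one_apply, sub_eq_zero]
  refine ⟨?_, ?_, ?_⟩
  · intro i v hv
    rw [hmem] at hv ⊢
    intro s hs
    have := congrArg (A i) (hv s hs)
    calc A s (A i v) = A i (A s v) := by
            rw [← Module.End.mul_apply, ← Module.End.mul_apply, (hcomm s i).eq]
      _ = μ • A i v := by rw [hv s hs, map_smul]
  · intro τ hτ v hv
    rw [hmem] at hv ⊢
    intro s hs
    have h1 : ρ τ (A s v) = A (τ s) (ρ τ v) := hρ τ s v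
    rw [hv s hs, map_smul, hτ s hs] at h1
    exact h1.symm
  · intro τ hτ i hi v hv
    exact hρ τ i v
end

section
/- Let $\mathcal{L} = \{\ell_1, \dots, \ell_k\}$ be a set of $k$ distinct lines (one-dimensional subspaces) in $\mathbb{C}^n$ such that for every permutation $\sigma \in \Sigma_k$ there exists $P_\sigma \in \mathrm{GL}_n(\mathbb{C})$ with $P_\sigma \ell_i = \ell_{\sigma(i)}$ for all $i$. Then $k \leq n+1$. -/
open Submodule Function Module

private lemma aux_pair {V : Type*} [AddCommGroup V] [Module ℂ V]
    (u0 u1 : V) (hind : ∀ s t : ℂ, s • u0 + t • u1 = 0 → s = 0 ∧ t = 0)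
    (b0 b1 a0 a1 α β γ δ : ℂ) (hb0 : b0 ≠ 0) (ha1 : a1 ≠ 0) (hγ : γ ≠ 0)
    (x y : V) (hx : x = b0 • u0 + b1 • u1) (hy : y = a0 • u0 + a1 • u1)
    (P : V →ₗ[ℂ] V)
    (h0 : P u0 = α • u0) (h1 : P u1 = γ • x) (hPx : P x = β • u1) (hPy : P y = δ • y) :
    a1 * b0 = 2 * (a0 * b1) := by
  have e1 : β • u1 = b0 • (α • u0) + b1 • (γ • (b0 • u0 + b1 • u1)) := by
    rw [← hPx]
    conv_lhs => rw [hx]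
    rw [map_add, map_smul, map_smul, h0, h1, hx]
  have key : (b0*α + b1*(γ*b0)) • u0 + (b1*(γ*b1) - β) • u1 = 0 := by
    linear_combination (norm := module) -e1
  obtain ⟨k1, k2⟩ := hind _ _ key
  have e2 : δ • y = a0 • (α • u0) + a1 • (γ • (b0 • u0 + b1 • u1)) := by
    rw [← hPy]
    conv_lhs => rw [hy]
    rw [map_add, map_smul, map_smul, h0, h1, hx]
  rw [hy] at e2
  have key2 : (a0*α + a1*(γ*b0) - δ*a0) • u0 + (a1*(γ*b1) - δ*a1) • u1 = 0 := by
    linear_combination (norm := module) -e2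
  obtain ⟨k3, k4⟩ := hind _ _ key2
  have h5 : a1*b0*γ*(a1*b0 - 2*(a0*b1)) = 0 := by
    linear_combination a1*b0*k3 - a0*b0*k4 - a0*a1*k1
  have hne : a1*b0*γ ≠ 0 := mul_ne_zero (mul_ne_zero ha1 hb0) hγ
  have := (mul_eq_zero.mp h5).resolve_left hne
  exact sub_eq_zero.mp this

/-- A totally symmetric arrangement of lines in `ℂⁿ` has at most `n+1` elements. -/
theorem stmt9 {n k : ℕ} (ℓ : Fin k → Submodule ℂ (Fin n → ℂ))
    (hline : ∀ i, Module.finrank ℂ (ℓ i) = 1)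
    (hinj : Function.Injective ℓ)
    (hts : ∀ σ : Equiv.Perm (Fin k), ∃ P : (Fin n → ℂ) ≃ₗ[ℂ] (Fin n → ℂ),
      ∀ i, (ℓ i).map P.toLinearMap = ℓ (σ i)) :
    k ≤ n + 1 := by
  classical
  by_contra hk
  push_neg at hk
  -- hk : n + 1 < k
  -- choose spanning vectors
  have hvex : ∀ i, ∃ w : Fin n → ℂ, w ≠ 0 ∧ ℓ i = span ℂ {w} := by
    intro i
    have h1 : (ℓ i) ≠ ⊥ := by
      intro h
      have h2 := hline i
      rw [h] at h2
      simp at h2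
    obtain ⟨w, hw, hw0⟩ := Submodule.exists_mem_ne_zero_of_ne_bot h1
    refine ⟨w, hw0, ?_⟩
    have hle : span ℂ {w} ≤ ℓ i := by
      rw [span_le, Set.singleton_subset_iff]; exact hw
    have heq : finrank ℂ (span ℂ {w} : Submodule ℂ _) = finrank ℂ (ℓ i) := by
      rw [finrank_span_singleton hw0, hline i]
    exact (Submodule.eq_of_le_of_finrank_eq hle heq).symm
  choose v hv0 hvspan using hvex
  have hvmem : ∀ i, v i ∈ ℓ i := fun i => by
    rw [hvspan i]; exact mem_span_singleton_self _
  have hk2 : 2 ≤ k := by omega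
  set i0 : Fin k := ⟨0, by omega⟩ with hi0
  have hn1 : 1 ≤ n := by
    by_contra h
    have h2 : finrank ℂ (ℓ i0) ≤ finrank ℂ (Fin n → ℂ) := Submodule.finrank_le _
    rw [hline i0, Module.finrank_fin_fun] at h2
    omega
  -- scalars for permutations
  have scal : ∀ σ : Equiv.Perm (Fin k), ∃ P : (Fin n → ℂ) ≃ₗ[ℂ] (Fin n → ℂ),
      ∃ c : Fin k → ℂ, ∀ l, c l ≠ 0 ∧ P (v l) = c l • v (σ l) := by
    intro σ
    obtain ⟨P, hP⟩ := hts σ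
    have hex : ∀ l, ∃ c : ℂ, c ≠ 0 ∧ P (v l) = c • v (σ l) := by
      intro l
      have hmem : P (v l) ∈ (ℓ l).map P.toLinearMap := Submodule.mem_map_of_mem (hvmem l)
      rw [hP l, hvspan (σ l), mem_span_singleton] at hmem
      obtain ⟨c, hc⟩ := hmem
      refine ⟨c, ?_, hc.symm⟩
      intro h0
      rw [h0, zero_smul] at hc
      exact (P.map_ne_zero_iff.mpr (hv0 l)) hc.symm
    choose c hc1 hc2 using hex
    exact ⟨P, c, fun l => ⟨hc1 l, hc2 l⟩⟩
  -- transfer of independence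
  have transfer : ∀ (m : ℕ) (f g : Fin m → Fin k), Injective f → Injective g →
      LinearIndependent ℂ (v ∘ f) → LinearIndependent ℂ (v ∘ g) := by
    intro m f g hf hg hlf
    let e : {x // x ∈ Set.range f} ≃ {x // x ∈ Set.range g} :=
      (Equiv.ofInjective f hf).symm.trans (Equiv.ofInjective g hg)
    let σ : Equiv.Perm (Fin k) := e.extendSubtype
    have hσ : ∀ i, σ (f i) = g i := by
      intro i
      have h1 : σ (f i) = ↑(e ⟨f i, Set.mem_range_self i⟩) :=
        Equiv.extendSubtype_apply_of_mem e (f i) (Set.mem_range_self i)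
      rw [h1]
      simp only [e, Equiv.trans_apply, Equiv.ofInjective_symm_apply, Equiv.ofInjective_apply]
    obtain ⟨P, c, hc⟩ := scal σ
    have h2 : LinearIndependent ℂ (P.toLinearMap ∘ (v ∘ f)) :=
      hlf.map' P.toLinearMap P.ker
    have h3 : LinearIndependent ℂ (fun i => c (f i) • v (g i)) := by
      have heq : (P.toLinearMap ∘ (v ∘ f)) = fun i => c (f i) • v (g i) := by
        funext i
        show P (v (f i)) = _
        rw [(hc (f i)).2, hσ i]
      rwa [heq] at h2
    have h4 := h3.units_smul (fun i => (Units.mk0 (c (f i)) (hc (f i)).1)⁻¹)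
    have heq2 : ((fun i => (Units.mk0 (c (f i)) (hc (f i)).1)⁻¹) • fun i => c (f i) • v (g i))
        = v ∘ g := by
      funext i
      simp only [Pi.smul_apply', Units.smul_def, smul_smul, Units.val_inv_eq_inv_val,
        Units.val_mk0]
      rw [inv_mul_cancel₀ (hc (f i)).1, one_smul]
      rfl
    rwa [heq2] at h4
  -- the rank d
  have hmain : ∃ d : ℕ, 1 ≤ d ∧ d ≤ n ∧
      (∀ g : Fin d → Fin k, Injective g → LinearIndependent ℂ (v ∘ g)) ∧
      (∀ g : Fin (d+1) → Fin k, Injective g → ¬ LinearIndependent ℂ (v ∘ g)) := by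
    set Q : ℕ → Prop := fun m => ∃ f : Fin m → Fin k, Injective f ∧ LinearIndependent ℂ (v ∘ f)
      with hQdef
    have hQ0 : Q 0 := ⟨Fin.elim0, fun a => a.elim0, linearIndependent_empty_type⟩
    have hQ1 : Q 1 := by
      refine ⟨fun _ => i0, fun a b _ => Subsingleton.elim a b, ?_⟩
      exact linearIndependent_unique_iff.mpr (hv0 i0)
    have hcard : ∀ m, Q m → m ≤ n := by
      rintro m ⟨f, hf, hlf⟩
      have h := hlf.fintype_card_le_finrank
      simpa [Module.finrank_fin_fun] using h
    have hQd : Q (Nat.findGreatest Q n) := Nat.findGreatest_spec (Nat.zero_le n) hQ0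
    have hd1 : 1 ≤ Nat.findGreatest Q n := Nat.le_findGreatest hn1 hQ1
    have hdn : Nat.findGreatest Q n ≤ n := Nat.findGreatest_le n
    obtain ⟨f0, hf0, hlf0⟩ := hQd
    refine ⟨Nat.findGreatest Q n, hd1, hdn, fun g hg => transfer _ f0 g hf0 hg hlf0, ?_⟩
    intro g hg hli
    have hQd1 : Q (Nat.findGreatest Q n + 1) := ⟨g, hg, hli⟩
    exact Nat.findGreatest_is_greatest (by omega) (hcard _ hQd1) hQd1
  obtain ⟨d, hd1, hdn, hindall, hdep⟩ := hmain
  have hd2k : d + 2 ≤ k := by omega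
  obtain ⟨idx, hidxval⟩ : ∃ idx : Fin d → Fin k, ∀ i, (idx i).val = i.val :=
    ⟨fun i => ⟨i.val, by omega⟩, fun i => rfl⟩
  obtain ⟨D, hDval⟩ : ∃ D : Fin k, D.val = d := ⟨⟨d, by omega⟩, rfl⟩
  obtain ⟨D', hD'val⟩ : ∃ D' : Fin k, D'.val = d + 1 := ⟨⟨d+1, by omega⟩, rfl⟩
  have hinj_idx : Injective idx := by
    intro a b h
    have := congrArg Fin.val h
    rw [hidxval, hidxval] at this
    exact Fin.ext this
  have hu : LinearIndependent ℂ (fun i => v (idx i)) := hindall idx hinj_idx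
  have hne : ∀ (p q : Fin k), p.val ≠ q.val → p ≠ q := by
    intro p q h hpq
    exact h (congrArg Fin.val hpq)
  -- membership of v D, v D' in span of the u's
  have hmemspan : ∀ D0 : Fin k, d ≤ D0.val →
      v D0 ∈ span ℂ (Set.range fun i => v (idx i)) := by
    intro D0 hD0
    by_contra hmem
    have hsnoc : LinearIndependent ℂ (Fin.snoc (fun i => v (idx i)) (v D0) : Fin (d+1) → _) :=
      linearIndependent_fin_snoc.mpr ⟨hu, hmem⟩
    have hval : ∀ a : Fin (d+1),
        ((Fin.snoc idx D0 : Fin (d+1) → Fin k) a).val = if a.val < d then a.val else D0.val := by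
      intro a
      rcases lt_or_ge a.val d with h | h
      · have ha : a = Fin.castSucc ⟨a.val, h⟩ := by ext; simp
        rw [ha, Fin.snoc_castSucc, if_pos]
        · exact hidxval _
        · simpa using h
      · have ha : a = Fin.last d := by ext; have := a.isLt; simp; omega
        rw [ha, Fin.snoc_last, if_neg]
        simp
    refine hdep (Fin.snoc idx D0) ?_ ?_
    · intro a b hab
      have h1 := congrArg Fin.val hab
      rw [hval a, hval b] at h1
      have ha := a.isLt
      have hb := b.isLt
      apply Fin.ext
      split_ifs at h1 <;> omega
    · have hcomp : (v ∘ Fin.snoc idx D0) = Fin.snoc (fun i => v (idx i)) (v D0) := by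
        have := Fin.comp_snoc v idx D0
        exact this
      rw [hcomp]
      exact hsnoc
  obtain ⟨b, hb⟩ := (mem_span_range_iff_exists_fun ℂ).mp (hmemspan D (by omega))
  obtain ⟨a, ha⟩ := (mem_span_range_iff_exists_fun ℂ).mp (hmemspan D' (by omega))
  -- nonzero coefficients
  have hcoe : ∀ (D0 : Fin k) (w : Fin d → ℂ), D0.val = d ∨ D0.val = d+1 →
      (∑ i, w i • v (idx i) = v D0) → ∀ i₀, w i₀ ≠ 0 := by
    intro D0 w hD0 hw i₀ h0
    set g' : Fin d → Fin k := fun i => if i = i₀ then D0 else idx i with hg'def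
    have hg'val : ∀ i, (g' i).val = if i = i₀ then D0.val else i.val := by
      intro i
      by_cases h : i = i₀ <;> simp [g', h, hidxval]
    have hg' : Injective g' := by
      intro x y hxy
      have h1 := congrArg Fin.val hxy
      rw [hg'val, hg'val] at h1
      have hx := x.isLt
      have hy := y.isLt
      apply Fin.ext
      split_ifs at h1 with h2 h3 h3
      · rw [h2, h3]
      · rcases hD0 with h4 | h4 <;> omega
      · rcases hD0 with h4 | h4 <;> omega
      · exact h1
    have hli := hindall g' hg'
    have hmem : v (g' i₀) ∈ span ℂ ((v ∘ g') '' {x | x ≠ i₀}) := by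
      have hsum : v (g' i₀) = ∑ i ∈ Finset.univ.erase i₀, w i • v (idx i) := by
        rw [Finset.sum_erase _ (by rw [h0, zero_smul]), hw]
        simp [g']
      rw [hsum]
      apply Submodule.sum_mem
      intro i hi
      have hne2 : i ≠ i₀ := Finset.ne_of_mem_erase hi
      apply Submodule.smul_mem
      apply subset_span
      refine ⟨i, hne2, ?_⟩
      simp [g', hne2]
    exact hli.notMem_span_image (by simp : i₀ ∉ {x | x ≠ i₀}) hmem
  have hbne := hcoe D b (Or.inl hDval) hb
  have hane := hcoe D' a (Or.inr hD'val) ha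
  -- lines determined by spanning vectors
  have keyline : ∀ (p q : Fin k) (t : ℂ), t ≠ 0 → v p = t • v q → p = q := by
    intro p q t ht hpq
    apply hinj
    rw [hvspan p, hvspan q, hpq]
    exact Submodule.span_singleton_smul_eq (IsUnit.mk0 t ht) _
  clear hmemspan hcoe hdep hvmem hts hline
  rcases Nat.lt_or_ge d 3 with hd3 | hd3
  · interval_cases d
    · -- d = 1
      rw [Fin.sum_univ_one] at hb
      have hDidx := keyline D (idx 0) (b 0) (hbne 0) hb.symm
      have h1 := congrArg Fin.val hDidx
      rw [hDval, hidxval] at h1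
      simp at h1
    · -- d = 2
      have hpair : ∀ s t : ℂ, s • v (idx 0) + t • v (idx 1) = 0 → s = 0 ∧ t = 0 := by
        intro s t hst
        have h := Fintype.linearIndependent_iff.mp hu ![s, t] ?_
        · exact ⟨h 0, h 1⟩
        · rw [Fin.sum_univ_two]
          simpa using hst
      have hpair' : ∀ s t : ℂ, s • v (idx 1) + t • v (idx 0) = 0 → s = 0 ∧ t = 0 := by
        intro s t hst
        obtain ⟨h1, h2⟩ := hpair t s (by rw [add_comm]; exact hst)
        exact ⟨h2, h1⟩
      have hb2 : v D = b 0 • v (idx 0) + b 1 • v (idx 1) := by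
        rw [← hb, Fin.sum_univ_two]
      have ha2 : v D' = a 0 • v (idx 0) + a 1 • v (idx 1) := by
        rw [← ha, Fin.sum_univ_two]
      have hb2' : v D = b 1 • v (idx 1) + b 0 • v (idx 0) := by rw [hb2, add_comm]
      have ha2' : v D' = a 1 • v (idx 1) + a 0 • v (idx 0) := by rw [ha2, add_comm]
      have hv01 : (idx 0).val = 0 := hidxval 0
      have hv11 : (idx 1).val = 1 := hidxval 1
      -- first transposition : swap (idx 1) D
      obtain ⟨P, c, hc⟩ := scal (Equiv.swap (idx 1) D)
      have ht0 : Equiv.swap (idx 1) D (idx 0) = idx 0 :=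
        Equiv.swap_apply_of_ne_of_ne (hne _ _ (by omega)) (hne _ _ (by omega))
      have ht1 : Equiv.swap (idx 1) D (idx 1) = D := Equiv.swap_apply_left _ _
      have htD : Equiv.swap (idx 1) D D = idx 1 := Equiv.swap_apply_right _ _
      have htD' : Equiv.swap (idx 1) D D' = D' :=
        Equiv.swap_apply_of_ne_of_ne (hne _ _ (by omega)) (hne _ _ (by omega))
      have r1 : a 1 * b 0 = 2 * (a 0 * b 1) := by
        refine aux_pair (v (idx 0)) (v (idx 1)) hpair (b 0) (b 1) (a 0) (a 1)
          (c (idx 0)) (c D) (c (idx 1)) (c D') (hbne 0) (hane 1) (hc (idx 1)).1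
          (v D) (v D') hb2 ha2 P.toLinearMap ?_ ?_ ?_ ?_
        · show P (v (idx 0)) = _
          rw [(hc (idx 0)).2, ht0]
        · show P (v (idx 1)) = _
          rw [(hc (idx 1)).2, ht1]
        · show P (v D) = _
          rw [(hc D).2, htD]
        · show P (v D') = _
          rw [(hc D').2, htD']
      -- second transposition : swap (idx 0) D
      obtain ⟨P2, c2, hc2⟩ := scal (Equiv.swap (idx 0) D)
      have hs0 : Equiv.swap (idx 0) D (idx 1) = idx 1 :=
        Equiv.swap_apply_of_ne_of_ne (hne _ _ (by omega)) (hne _ _ (by omega))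
      have hs1 : Equiv.swap (idx 0) D (idx 0) = D := Equiv.swap_apply_left _ _
      have hsD : Equiv.swap (idx 0) D D = idx 0 := Equiv.swap_apply_right _ _
      have hsD' : Equiv.swap (idx 0) D D' = D' :=
        Equiv.swap_apply_of_ne_of_ne (hne _ _ (by omega)) (hne _ _ (by omega))
      have r2 : a 0 * b 1 = 2 * (a 1 * b 0) := by
        refine aux_pair (v (idx 1)) (v (idx 0)) hpair' (b 1) (b 0) (a 1) (a 0)
          (c2 (idx 1)) (c2 D) (c2 (idx 0)) (c2 D') (hbne 1) (hane 0) (hc2 (idx 0)).1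
          (v D) (v D') hb2' ha2' P2.toLinearMap ?_ ?_ ?_ ?_
        · show P2 (v (idx 1)) = _
          rw [(hc2 (idx 1)).2, hs0]
        · show P2 (v (idx 0)) = _
          rw [(hc2 (idx 0)).2, hs1]
        · show P2 (v D) = _
          rw [(hc2 D).2, hsD]
        · show P2 (v D') = _
          rw [(hc2 D').2, hsD']
      have h3 : (3:ℂ) * (a 1 * b 0) = 0 := by linear_combination -r1 - 2*r2
      have h4 : a 1 * b 0 = 0 := (mul_eq_zero.mp h3).resolve_left (by norm_num)
      exact (mul_ne_zero (hane 1) (hbne 0)) h4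
  · -- d ≥ 3
    have hswap_idx : ∀ (i j l : Fin d),
        Equiv.swap (idx i) (idx j) (idx l) = idx (Equiv.swap i j l) := by
      intro i j l
      rcases eq_or_ne l i with rfl | hli
      · rw [Equiv.swap_apply_left, Equiv.swap_apply_left]
      rcases eq_or_ne l j with rfl | hlj
      · rw [Equiv.swap_apply_right, Equiv.swap_apply_right]
      · rw [Equiv.swap_apply_of_ne_of_ne (hinj_idx.ne hli) (hinj_idx.ne hlj),
          Equiv.swap_apply_of_ne_of_ne hli hlj]
    have prop : ∀ i j : Fin d, a i * b j = a j * b i := by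
      intro i j
      rcases eq_or_ne i j with rfl | hij
      · ring
      obtain ⟨P, c, hc⟩ := scal (Equiv.swap (idx i) (idx j))
      have hτD : Equiv.swap (idx i) (idx j) D = D := by
        refine Equiv.swap_apply_of_ne_of_ne (hne _ _ ?_) (hne _ _ ?_)
        · rw [hDval, hidxval]; have := i.isLt; omega
        · rw [hDval, hidxval]; have := j.isLt; omega
      have hτD' : Equiv.swap (idx i) (idx j) D' = D' := by
        refine Equiv.swap_apply_of_ne_of_ne (hne _ _ ?_) (hne _ _ ?_)
        · rw [hD'val, hidxval]; have := i.isLt; omega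
        · rw [hD'val, hidxval]; have := j.isLt; omega
      have coords : ∀ (w : Fin d → ℂ) (D0 : Fin k), Equiv.swap (idx i) (idx j) D0 = D0 →
          (∑ m, w m • v (idx m) = v D0) →
          ∀ m, c D0 * w m = w (Equiv.swap i j m) * c (idx (Equiv.swap i j m)) := by
        intro w D0 hτD0 hw m
        have e1 : P (v D0) = c D0 • v D0 := by rw [(hc D0).2, hτD0]
        have e2 : P (v D0) = ∑ l, (w l * c (idx l)) • v (idx (Equiv.swap i j l)) := by
          rw [← hw, map_sum]
          refine Finset.sum_congr rfl fun l _ => ?_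
          rw [map_smul]
          show w l • P (v (idx l)) = _
          rw [(hc (idx l)).2, hswap_idx i j l, smul_smul]
        have e3 : ∑ l, (w l * c (idx l)) • v (idx (Equiv.swap i j l))
            = ∑ m', (w (Equiv.swap i j m') * c (idx (Equiv.swap i j m'))) • v (idx m') := by
          rw [← Equiv.sum_comp (Equiv.swap i j)
            (fun m' => (w (Equiv.swap i j m') * c (idx (Equiv.swap i j m'))) • v (idx m'))]
          refine Finset.sum_congr rfl fun l _ => ?_
          rw [Equiv.swap_apply_self]
        have eA : ∑ m', (c D0 * w m') • v (idx m') = c D0 • v D0 := by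
          rw [← hw, Finset.smul_sum]
          exact Finset.sum_congr rfl fun m' _ => (smul_smul _ _ _).symm
        have eB : ∑ m', (w (Equiv.swap i j m') * c (idx (Equiv.swap i j m'))) • v (idx m')
            = c D0 • v D0 := by rw [← e3, ← e2, e1]
        have e4 : ∑ m', (c D0 * w m' - w (Equiv.swap i j m') * c (idx (Equiv.swap i j m')))
            • v (idx m') = 0 := by
          simp only [sub_smul]
          rw [Finset.sum_sub_distrib, eA, eB, sub_self]
        exact sub_eq_zero.mp (Fintype.linearIndependent_iff.mp hu _ e4 m)
      obtain ⟨l, hli, hlj⟩ : ∃ l : Fin d, l ≠ i ∧ l ≠ j := by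
        by_contra hcon
        push_neg at hcon
        have hsub : (Finset.univ : Finset (Fin d)) ⊆ {i, j} := by
          intro l _
          simp only [Finset.mem_insert, Finset.mem_singleton]
          rcases eq_or_ne l i with h | h
          · exact Or.inl h
          · exact Or.inr (hcon l h)
        have hcard := Finset.card_le_card hsub
        have hc2 : ({i, j} : Finset (Fin d)).card ≤ 2 := by
          refine le_trans (Finset.card_insert_le _ _) ?_
          simp
        rw [Finset.card_univ, Fintype.card_fin] at hcard
        omega
      have hsl : Equiv.swap i j l = l := Equiv.swap_apply_of_ne_of_ne hli hlj
      have hbl := coords b D hτD hb l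
      rw [hsl] at hbl
      have hal := coords a D' hτD' ha l
      rw [hsl] at hal
      have hbi := coords b D hτD hb i
      rw [Equiv.swap_apply_left] at hbi
      have hai := coords a D' hτD' ha i
      rw [Equiv.swap_apply_left] at hai
      have h1 : c D = c (idx l) := mul_right_cancel₀ (hbne l) (by linear_combination hbl)
      have h2 : c D' = c (idx l) := mul_right_cancel₀ (hane l) (by linear_combination hal)
      have hai' : c D * a i = a j * c (idx j) := by rw [h1, ← h2]; exact hai
      have h5 : c (idx j) * (a j * b i - a i * b j) = 0 := by
        linear_combination a i * hbi - b i * hai'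
      have h6 := (mul_eq_zero.mp h5).resolve_left (hc (idx j)).1
      exact (sub_eq_zero.mp h6).symm
    have hi1 : (0:ℕ) < d := by omega
    set i1 : Fin d := ⟨0, hi1⟩
    have ht : a i1 / b i1 ≠ 0 := div_ne_zero (hane i1) (hbne i1)
    have hab : ∀ m, a m = a i1 / b i1 * b m := by
      intro m
      rw [div_mul_eq_mul_div, eq_div_iff (hbne i1)]
      exact prop m i1
    have hvv : v D' = (a i1 / b i1) • v D := by
      rw [← ha, ← hb, Finset.smul_sum]
      refine Finset.sum_congr rfl fun m _ => ?_
      rw [hab m, mul_smul]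
    have hDD' := keyline D' D _ ht hvv
    have hfin := congrArg Fin.val hDD'
    rw [hD'val, hDval] at hfin
    omega
end

section
/- Let $\mathcal{W} = \{W_1, \dots, W_k\}$ ($k \geq 4$) be a totally symmetric arrangement of $d$-planes in $\mathbb{C}^{2d}$ with $W_i \oplus W_j = \mathbb{C}^{2d}$ for all $i \neq j$, in the normal form with $W_1 = \mathrm{col}\binom{I}{0}$, $W_2 = \mathrm{col}\binom{0}{I}$, $W_3 = \mathrm{col}\binom{I}{I}$, $W_i = \mathrm{col}\binom{A_i}{I}$. Then each $A_i$ ($i \geq 4$) is conjugate in $\mathrm{GL}_d(\mathbb{C})$ to $A_i^{-1}$ and also conjugate to $I - A_i$. Consequently, the multiset of eigenvalues of $A_i$ is invariant under both $\lambda \mapsto \lambda^{-1}$ and $\lambda \mapsto 1 - \lambda$. -/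
/-- The column span of the block matrix `(A; I)`, i.e. `{(A y, y) : y}`. -/
noncomputable def colSpan (d : ℕ) (A : Module.End ℂ (Fin d → ℂ)) :
    Submodule ℂ ((Fin d → ℂ) × (Fin d → ℂ)) :=
  LinearMap.range (LinearMap.prod (A : (Fin d → ℂ) →ₗ[ℂ] (Fin d → ℂ)) LinearMap.id)

open Polynomial LinearMap

lemma mem_colSpan_iff {d : ℕ} (A : Module.End ℂ (Fin d → ℂ))
    (x : (Fin d → ℂ) × (Fin d → ℂ)) : x ∈ colSpan d A ↔ A x.2 = x.1 := by
  constructor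
  · rintro ⟨y, rfl⟩; rfl
  · intro h; exact ⟨x.2, by simp [LinearMap.prod_apply, h]⟩

lemma mem_range_inl_iff {d : ℕ} (x : (Fin d → ℂ) × (Fin d → ℂ)) :
    x ∈ LinearMap.range (LinearMap.inl ℂ (Fin d → ℂ) (Fin d → ℂ)) ↔ x.2 = 0 := by
  rw [LinearMap.range_inl, LinearMap.mem_ker]; rfl

lemma mem_range_inr_iff {d : ℕ} (x : (Fin d → ℂ) × (Fin d → ℂ)) :
    x ∈ LinearMap.range (LinearMap.inr ℂ (Fin d → ℂ) (Fin d → ℂ)) ↔ x.1 = 0 := by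
  rw [LinearMap.range_inr, LinearMap.mem_ker]; rfl

lemma charpoly_eval_det {d : ℕ} (f : Module.End ℂ (Fin d → ℂ)) (t : ℂ) :
    f.charpoly.eval t = LinearMap.det (t • (1 : Module.End ℂ (Fin d → ℂ)) - f) := by
  classical
  let b := Pi.basisFun ℂ (Fin d)
  have hsm : (Matrix.scalar (Fin d) t) = t • (1 : Matrix (Fin d) (Fin d) ℂ) := by
    ext i j
    simp only [Matrix.scalar_apply, Matrix.diagonal_apply, Matrix.smul_apply,
      Matrix.one_apply, smul_eq_mul]
    split_ifs <;> simp
  rw [← LinearMap.charpoly_toMatrix f b, Matrix.charpoly, _root_.eval_det,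
    Matrix.matPolyEquiv_charmatrix, ← LinearMap.det_toMatrix b]
  congr 1
  rw [eval_sub, eval_X, eval_C]
  have h2' : (LinearMap.toMatrix b b) (t • (1 : Module.End ℂ (Fin d → ℂ)) - f)
      = t • ((LinearMap.toMatrix b b) 1) - (LinearMap.toMatrix b b) f := by
    exact ((LinearMap.toMatrix b b).toLinearMap.map_sub (t • 1) f).trans
      (congrArg (· - (LinearMap.toMatrix b b) f)
        ((LinearMap.toMatrix b b).toLinearMap.map_smul t 1))
  rw [h2', LinearMap.toMatrix_one, hsm]

lemma roots_eq_of_eval_eq {q : ℂ[X]} {s : Multiset ℂ}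
    (h : ∀ t : ℂ, t ≠ 0 → q.eval t = ((s.map fun a => X - C a)).prod.eval t) :
    q.roots = s := by
  have hq : q = ((s.map fun a => X - C a)).prod := by
    have hz : q - ((s.map fun a => X - C a)).prod = 0 := by
      apply Polynomial.eq_zero_of_infinite_isRoot
      have hinf : ({t : ℂ | t ≠ 0}).Infinite := by
        have : ({0}ᶜ : Set ℂ).Infinite := (Set.finite_singleton 0).infinite_compl
        simpa [Set.compl_singleton_eq] using this
      apply hinf.mono
      intro t ht
      simp only [Set.mem_setOf_eq, IsRoot, eval_sub, sub_eq_zero]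
      exact h t ht
    rw [sub_eq_zero] at hz; exact hz
  rw [hq, Polynomial.roots_multiset_prod_X_sub_C]

lemma eval_prod_roots {s : Multiset ℂ} (t : ℂ) :
    ((s.map fun a => X - C a)).prod.eval t = (s.map fun a => t - a).prod := by
  rw [Polynomial.eval_multiset_prod, Multiset.map_map]
  congr 1
  apply Multiset.map_congr rfl
  intro r _
  simp

lemma roots_inv_aux {d : ℕ} (f g : Module.End ℂ (Fin d → ℂ)) (hfg : f * g = 1)
    (hcp : g.charpoly = f.charpoly) :
    f.charpoly.roots.map (fun x => x⁻¹) = f.charpoly.roots := by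
  set n := Module.finrank ℂ (Fin d → ℂ) with hn
  set p := f.charpoly with hp
  set R := p.roots with hR
  have hm : p.Monic := f.charpoly_monic
  have hcard : Multiset.card R = p.natDegree :=
    Polynomial.splits_iff_card_roots.mp (IsAlgClosed.splits p)
  have hdeg : p.natDegree = n := f.charpoly_natDegree
  have hcn : Multiset.card R = n := hcard.trans hdeg
  have hprod : ((R.map fun a => X - C a)).prod = p :=
    Polynomial.prod_multiset_X_sub_C_of_monic_of_roots_card_eq hm hcard
  have hgf : g * f = 1 := mul_eq_one_comm.mp hfg
  have hdet1 : LinearMap.det f * LinearMap.det g = 1 := by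
    rw [← map_mul, hfg, map_one]
  have hdf : LinearMap.det f ≠ 0 := left_ne_zero_of_mul_eq_one hdet1
  have hpe : ∀ t : ℂ, p.eval t = LinearMap.det (t • (1 : Module.End ℂ (Fin d → ℂ)) - f) :=
    charpoly_eval_det f
  have hconst : ∀ c : ℂ, (R.map fun _ => c).prod = c ^ n := by
    intro c
    rw [Multiset.map_const', Multiset.prod_replicate, hcn]
  have hdetprod : R.prod = LinearMap.det f := by
    have h0 : p.eval 0 = (-1 : ℂ) ^ n * LinearMap.det f := by
      rw [hpe 0, zero_smul, zero_sub, ← neg_one_smul ℂ f, LinearMap.det_smul]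
    have h0' : p.eval 0 = (-1 : ℂ) ^ n * R.prod := by
      rw [← hprod, eval_prod_roots]
      calc (R.map fun a => (0 : ℂ) - a).prod
          = (R.map fun a => (-1 : ℂ) * a).prod := by
            apply congrArg Multiset.prod
            apply Multiset.map_congr rfl
            intro r _; ring
        _ = (R.map fun _ => (-1 : ℂ)).prod * (R.map fun a => a).prod :=
            Multiset.prod_map_mul
        _ = (-1 : ℂ) ^ n * R.prod := by rw [hconst, Multiset.map_id']
    have := h0.symm.trans h0'
    exact (mul_left_cancel₀ (pow_ne_zero n (by norm_num : (-1 : ℂ) ≠ 0)) this).symm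
  have hr0 : ∀ r ∈ R, r ≠ 0 := by
    intro r hr h0
    exact hdf (hdetprod ▸ Multiset.prod_eq_zero (h0 ▸ hr))
  suffices hq : g.charpoly.roots = R.map (fun x => x⁻¹) by
    rw [hcp] at hq; rw [← hq]
  apply roots_eq_of_eval_eq
  intro t ht
  rw [charpoly_eval_det, eval_prod_roots, Multiset.map_map]
  have e1 : (t • (1 : Module.End ℂ (Fin d → ℂ)) - g) * f
      = (-t) • (t⁻¹ • (1 : Module.End ℂ (Fin d → ℂ)) - f) := by
    rw [sub_mul, smul_mul_assoc, one_mul, hgf]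
    match_scalars
    · field_simp
    · field_simp
  have key : LinearMap.det (t • (1 : Module.End ℂ (Fin d → ℂ)) - g) * LinearMap.det f
      = (R.map fun r => t - r⁻¹).prod * LinearMap.det f := by
    calc LinearMap.det (t • (1 : Module.End ℂ (Fin d → ℂ)) - g) * LinearMap.det f
        = LinearMap.det ((t • (1 : Module.End ℂ (Fin d → ℂ)) - g) * f) :=
          (map_mul LinearMap.det _ _).symm
      _ = LinearMap.det ((-t) • (t⁻¹ • (1 : Module.End ℂ (Fin d → ℂ)) - f)) := by rw [e1]
      _ = (-t) ^ n * p.eval t⁻¹ := by rw [LinearMap.det_smul, ← hpe]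
      _ = (-t) ^ n * (R.map fun r => t⁻¹ - r).prod := by rw [← hprod, eval_prod_roots]
      _ = (R.map fun _ => -t).prod * (R.map fun r => t⁻¹ - r).prod := by rw [hconst]
      _ = (R.map fun r => -t * (t⁻¹ - r)).prod := Multiset.prod_map_mul.symm
      _ = (R.map fun r => r * (t - r⁻¹)).prod := by
          apply congrArg Multiset.prod
          apply Multiset.map_congr rfl
          intro r hr
          have hrne : r ≠ 0 := hr0 r hr
          field_simp
          ring
      _ = (R.map fun r => r).prod * (R.map fun r => t - r⁻¹).prod := Multiset.prod_map_mul
      _ = (R.map fun r => t - r⁻¹).prod * LinearMap.det f := by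
          rw [Multiset.map_id', hdetprod, mul_comm]
  have hfin := mul_right_cancel₀ hdf key
  rw [hfin]
  apply congrArg Multiset.prod
  apply Multiset.map_congr rfl
  intro r _
  simp

lemma roots_one_sub_aux {d : ℕ} (f : Module.End ℂ (Fin d → ℂ))
    (hcp : (1 - f).charpoly = f.charpoly) :
    f.charpoly.roots.map (fun x => 1 - x) = f.charpoly.roots := by
  set n := Module.finrank ℂ (Fin d → ℂ) with hn
  set p := f.charpoly with hp
  set R := p.roots with hR
  have hm : p.Monic := f.charpoly_monic
  have hcard : Multiset.card R = p.natDegree :=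
    Polynomial.splits_iff_card_roots.mp (IsAlgClosed.splits p)
  have hcn : Multiset.card R = n := hcard.trans f.charpoly_natDegree
  have hprod : ((R.map fun a => X - C a)).prod = p :=
    Polynomial.prod_multiset_X_sub_C_of_monic_of_roots_card_eq hm hcard
  have hpe : ∀ t : ℂ, p.eval t = LinearMap.det (t • (1 : Module.End ℂ (Fin d → ℂ)) - f) :=
    charpoly_eval_det f
  have hconst : ∀ c : ℂ, (R.map fun _ => c).prod = c ^ n := by
    intro c
    rw [Multiset.map_const', Multiset.prod_replicate, hcn]
  suffices hq : (1 - f).charpoly.roots = R.map (fun x => 1 - x) by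
    rw [hcp] at hq; rw [← hq]
  apply roots_eq_of_eval_eq
  intro t _
  rw [charpoly_eval_det, eval_prod_roots, Multiset.map_map]
  have e1 : t • (1 : Module.End ℂ (Fin d → ℂ)) - (1 - f)
      = (-1 : ℂ) • ((1 - t) • (1 : Module.End ℂ (Fin d → ℂ)) - f) := by
    module
  calc LinearMap.det (t • (1 : Module.End ℂ (Fin d → ℂ)) - (1 - f))
      = LinearMap.det ((-1 : ℂ) • ((1 - t) • (1 : Module.End ℂ (Fin d → ℂ)) - f)) := by
        rw [e1]
    _ = (-1 : ℂ) ^ n * p.eval (1 - t) := by rw [LinearMap.det_smul, ← hpe]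
    _ = (-1 : ℂ) ^ n * (R.map fun r => (1 - t) - r).prod := by rw [← hprod, eval_prod_roots]
    _ = (R.map fun _ => (-1 : ℂ)).prod * (R.map fun r => (1 - t) - r).prod := by rw [hconst]
    _ = (R.map fun r => (-1 : ℂ) * ((1 - t) - r)).prod := Multiset.prod_map_mul.symm
    _ = (R.map ((fun a => t - a) ∘ fun x => 1 - x)).prod := by
        apply congrArg Multiset.prod
        apply Multiset.map_congr rfl
        intro r _
        simp only [Function.comp_apply]
        ring

/-- Each matrix `A_i` in the normal form of a maximal half-dimensional
totally symmetric arrangement is conjugate to `A_i⁻¹` and to `I - A_i`, and hence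
its eigenvalue multiset is invariant under `λ ↦ λ⁻¹` and `λ ↦ 1 - λ`. -/
theorem stmt15 {d k : ℕ} (hk : 4 ≤ k)
    (A : Fin k → Module.End ℂ (Fin d → ℂ))
    (W : Fin k → Submodule ℂ ((Fin d → ℂ) × (Fin d → ℂ)))
    (hW0 : W ⟨0, by omega⟩ = LinearMap.range (LinearMap.inl ℂ (Fin d → ℂ) (Fin d → ℂ)))
    (hW1 : W ⟨1, by omega⟩ = LinearMap.range (LinearMap.inr ℂ (Fin d → ℂ) (Fin d → ℂ)))
    (hW2 : W ⟨2, by omega⟩ = colSpan d 1)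
    (hWi : ∀ i : Fin k, 3 ≤ (i : ℕ) → W i = colSpan d (A i))
    (hbij : ∀ i : Fin k, 3 ≤ (i : ℕ) → Function.Bijective (A i))
    (hts : ∀ σ : Equiv.Perm (Fin k),
      ∃ P : ((Fin d → ℂ) × (Fin d → ℂ)) ≃ₗ[ℂ] ((Fin d → ℂ) × (Fin d → ℂ)),
        ∀ i, (W i).map P.toLinearMap = W (σ i)) :
    ∀ i : Fin k, 3 ≤ (i : ℕ) →
      (∃ Y : (Fin d → ℂ) ≃ₗ[ℂ] (Fin d → ℂ), ∀ v, A i (Y (A i v)) = Y v) ∧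
      (∃ Z : (Fin d → ℂ) ≃ₗ[ℂ] (Fin d → ℂ), ∀ v, Z (A i v) = Z v - A i (Z v)) ∧
      (LinearMap.charpoly (A i)).roots.map (fun x => x⁻¹) =
        (LinearMap.charpoly (A i)).roots ∧
      (LinearMap.charpoly (A i)).roots.map (fun x => 1 - x) =
        (LinearMap.charpoly (A i)).roots := by
  intro i hi
  have h0k : (0 : ℕ) < k := by omega
  have h1k : (1 : ℕ) < k := by omega
  have h2k : (2 : ℕ) < k := by omega
  set i0 : Fin k := ⟨0, h0k⟩ with hi0
  set i1 : Fin k := ⟨1, h1k⟩ with hi1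
  set i2 : Fin k := ⟨2, h2k⟩ with hi2
  have hW0' : W i0 = LinearMap.range (LinearMap.inl ℂ (Fin d → ℂ) (Fin d → ℂ)) := hW0
  have hW1' : W i1 = LinearMap.range (LinearMap.inr ℂ (Fin d → ℂ) (Fin d → ℂ)) := hW1
  have hW2' : W i2 = colSpan d 1 := hW2
  have hWii : W i = colSpan d (A i) := hWi i hi
  have hne0 : i ≠ i0 := by simp [hi0, Fin.ext_iff]; omega
  have hne1 : i ≠ i1 := by simp [hi1, Fin.ext_iff]; omega
  have hne2 : i ≠ i2 := by simp [hi2, Fin.ext_iff]; omega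
  have hne01 : i0 ≠ i1 := by simp [hi0, hi1, Fin.ext_iff]
  have hne02 : i0 ≠ i2 := by simp [hi0, hi2, Fin.ext_iff]
  have hne12 : i1 ≠ i2 := by simp [hi1, hi2, Fin.ext_iff]
  -- Part A : conjugation to the inverse, via the transposition (0 1)
  have partA : ∃ Y : (Fin d → ℂ) ≃ₗ[ℂ] (Fin d → ℂ), ∀ v, A i (Y (A i v)) = Y v := by
    obtain ⟨P, hP⟩ := hts (Equiv.swap i0 i1)
    have h0 : (LinearMap.range (LinearMap.inl ℂ (Fin d → ℂ) (Fin d → ℂ))).map P.toLinearMap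
        = LinearMap.range (LinearMap.inr ℂ (Fin d → ℂ) (Fin d → ℂ)) := by
      have := hP i0
      rwa [Equiv.swap_apply_left, hW0', hW1'] at this
    have h2 : (colSpan d 1).map P.toLinearMap = colSpan d 1 := by
      have := hP i2
      rwa [Equiv.swap_apply_of_ne_of_ne hne02.symm hne12.symm, hW2'] at this
    have hiw : (colSpan d (A i)).map P.toLinearMap = colSpan d (A i) := by
      have := hP i
      rwa [Equiv.swap_apply_of_ne_of_ne hne0 hne1, hWii] at this
    set Bl : (Fin d → ℂ) →ₗ[ℂ] (Fin d → ℂ) :=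
      (LinearMap.snd ℂ (Fin d → ℂ) (Fin d → ℂ)) ∘ₗ
        (P.toLinearMap ∘ₗ LinearMap.inl ℂ (Fin d → ℂ) (Fin d → ℂ)) with hBl
    have hBl' : ∀ x : Fin d → ℂ, Bl x = (P (x, 0)).2 := fun x => rfl
    set Cl : (Fin d → ℂ) →ₗ[ℂ] (Fin d → ℂ) :=
      (LinearMap.fst ℂ (Fin d → ℂ) (Fin d → ℂ)) ∘ₗ
        (P.toLinearMap ∘ₗ LinearMap.inr ℂ (Fin d → ℂ) (Fin d → ℂ)) with hCl
    have hCl' : ∀ y : Fin d → ℂ, Cl y = (P (0, y)).1 := fun y => rfl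
    have hB : ∀ x : Fin d → ℂ, P (x, 0) = (0, Bl x) := by
      intro x
      have hx : (P (x, 0) : (Fin d → ℂ) × (Fin d → ℂ))
          ∈ LinearMap.range (LinearMap.inr ℂ (Fin d → ℂ) (Fin d → ℂ)) := by
        rw [← h0]
        exact ⟨(x, 0), ⟨x, rfl⟩, rfl⟩
      rw [mem_range_inr_iff] at hx
      exact Prod.ext hx (hBl' x).symm
    have hC : ∀ y : Fin d → ℂ, P (0, y) = (Cl y, 0) := by
      intro y
      have hx : (P (0, y) : (Fin d → ℂ) × (Fin d → ℂ))
          ∈ LinearMap.range (LinearMap.inl ℂ (Fin d → ℂ) (Fin d → ℂ)) := by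
        have h1 : (LinearMap.range (LinearMap.inr ℂ (Fin d → ℂ) (Fin d → ℂ))).map P.toLinearMap
            = LinearMap.range (LinearMap.inl ℂ (Fin d → ℂ) (Fin d → ℂ)) := by
          have := hP i1
          rwa [Equiv.swap_apply_right, hW1', hW0'] at this
        rw [← h1]
        exact ⟨(0, y), ⟨y, rfl⟩, rfl⟩
      rw [mem_range_inl_iff] at hx
      exact Prod.ext (hCl' y).symm hx
    have hsplit : ∀ x y : Fin d → ℂ, P (x, y) = (Cl y, Bl x) := by
      intro x y
      have : ((x, y) : (Fin d → ℂ) × (Fin d → ℂ)) = (x, 0) + (0, y) := by simp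
      rw [this, map_add, hB, hC]
      simp [Prod.ext_iff]
    have hBC : ∀ y : Fin d → ℂ, Cl y = Bl y := by
      intro y
      have hmem : (P (y, y) : (Fin d → ℂ) × (Fin d → ℂ)) ∈ colSpan d 1 := by
        rw [← h2]
        exact Submodule.mem_map_of_mem ((mem_colSpan_iff _ _).mpr rfl)
      rw [hsplit y y, mem_colSpan_iff] at hmem
      simpa using hmem.symm
    have hABA : ∀ y : Fin d → ℂ, A i (Bl (A i y)) = Bl y := by
      intro y
      have hmem : (P (A i y, y) : (Fin d → ℂ) × (Fin d → ℂ)) ∈ colSpan d (A i) := by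
        rw [← hiw]
        exact Submodule.mem_map_of_mem ((mem_colSpan_iff _ _).mpr rfl)
      rw [hsplit (A i y) y, mem_colSpan_iff] at hmem
      rw [hmem, hBC]
    have hinj : Function.Injective Bl := by
      intro a b hab
      have h1 : P (a - b, 0) = 0 := by
        rw [hB, map_sub Bl, hab, sub_self]; rfl
      have h2 : ((a - b, 0) : (Fin d → ℂ) × (Fin d → ℂ)) = 0 := by
        apply P.injective; rw [h1, map_zero]
      have := congrArg Prod.fst h2
      simpa [sub_eq_zero] using this
    have hsurj : Function.Surjective Bl := by
      intro w
      have : ((0, w) : (Fin d → ℂ) × (Fin d → ℂ))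
          ∈ LinearMap.range (LinearMap.inr ℂ (Fin d → ℂ) (Fin d → ℂ)) := ⟨w, rfl⟩
      rw [← h0] at this
      obtain ⟨v, hv, hPv⟩ := this
      obtain ⟨x, rfl⟩ := hv
      refine ⟨x, ?_⟩
      have : P (x, 0) = (0, w) := hPv
      rw [hB] at this
      exact (congrArg Prod.snd this)
    exact ⟨LinearEquiv.ofBijective Bl ⟨hinj, hsurj⟩, fun v => hABA v⟩
  -- Part B : conjugation to 1 - A, via the transposition (1 2)
  have partB : ∃ Z : (Fin d → ℂ) ≃ₗ[ℂ] (Fin d → ℂ), ∀ v, Z (A i v) = Z v - A i (Z v) := by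
    obtain ⟨P, hP⟩ := hts (Equiv.swap i1 i2)
    have h0 : (LinearMap.range (LinearMap.inl ℂ (Fin d → ℂ) (Fin d → ℂ))).map P.toLinearMap
        = LinearMap.range (LinearMap.inl ℂ (Fin d → ℂ) (Fin d → ℂ)) := by
      have := hP i0
      rwa [Equiv.swap_apply_of_ne_of_ne hne01 hne02, hW0'] at this
    have h1 : (LinearMap.range (LinearMap.inr ℂ (Fin d → ℂ) (Fin d → ℂ))).map P.toLinearMap
        = colSpan d 1 := by
      have := hP i1
      rwa [Equiv.swap_apply_left, hW1', hW2'] at this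
    have h2 : (colSpan d 1).map P.toLinearMap
        = LinearMap.range (LinearMap.inr ℂ (Fin d → ℂ) (Fin d → ℂ)) := by
      have := hP i2
      rwa [Equiv.swap_apply_right, hW2', hW1'] at this
    have hiw : (colSpan d (A i)).map P.toLinearMap = colSpan d (A i) := by
      have := hP i
      rwa [Equiv.swap_apply_of_ne_of_ne hne1 hne2, hWii] at this
    set Dl : (Fin d → ℂ) →ₗ[ℂ] (Fin d → ℂ) :=
      (LinearMap.fst ℂ (Fin d → ℂ) (Fin d → ℂ)) ∘ₗ
        (P.toLinearMap ∘ₗ LinearMap.inl ℂ (Fin d → ℂ) (Fin d → ℂ)) with hDl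
    have hDl' : ∀ x : Fin d → ℂ, Dl x = (P (x, 0)).1 := fun x => rfl
    set Cl : (Fin d → ℂ) →ₗ[ℂ] (Fin d → ℂ) :=
      (LinearMap.snd ℂ (Fin d → ℂ) (Fin d → ℂ)) ∘ₗ
        (P.toLinearMap ∘ₗ LinearMap.inr ℂ (Fin d → ℂ) (Fin d → ℂ)) with hCl
    have hCl' : ∀ y : Fin d → ℂ, Cl y = (P (0, y)).2 := fun y => rfl
    have hD : ∀ x : Fin d → ℂ, P (x, 0) = (Dl x, 0) := by
      intro x
      have hx : (P (x, 0) : (Fin d → ℂ) × (Fin d → ℂ))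
          ∈ LinearMap.range (LinearMap.inl ℂ (Fin d → ℂ) (Fin d → ℂ)) := by
        rw [← h0]
        exact ⟨(x, 0), ⟨x, rfl⟩, rfl⟩
      rw [mem_range_inl_iff] at hx
      exact Prod.ext (hDl' x).symm hx
    have hC : ∀ y : Fin d → ℂ, P (0, y) = (Cl y, Cl y) := by
      intro y
      have hx : (P (0, y) : (Fin d → ℂ) × (Fin d → ℂ)) ∈ colSpan d 1 := by
        rw [← h1]
        exact ⟨(0, y), ⟨y, rfl⟩, rfl⟩
      rw [mem_colSpan_iff] at hx
      have hx' : (P (0, y)).2 = (P (0, y)).1 := hx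
      exact Prod.ext (by rw [hCl', hx']) (hCl' y).symm
    have hsplit : ∀ x y : Fin d → ℂ, P (x, y) = (Dl x + Cl y, Cl y) := by
      intro x y
      have : ((x, y) : (Fin d → ℂ) × (Fin d → ℂ)) = (x, 0) + (0, y) := by simp
      rw [this, map_add, hD, hC]
      simp [Prod.ext_iff]
    have hDC : ∀ y : Fin d → ℂ, Dl y = -Cl y := by
      intro y
      have hmem : (P (y, y) : (Fin d → ℂ) × (Fin d → ℂ))
          ∈ LinearMap.range (LinearMap.inr ℂ (Fin d → ℂ) (Fin d → ℂ)) := by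
        rw [← h2]
        exact Submodule.mem_map_of_mem ((mem_colSpan_iff _ _).mpr rfl)
      rw [hsplit y y, mem_range_inr_iff] at hmem
      simp only at hmem
      linear_combination (norm := module) hmem
    have hZrel : ∀ y : Fin d → ℂ, Cl (A i y) = Cl y - A i (Cl y) := by
      intro y
      have hmem : (P (A i y, y) : (Fin d → ℂ) × (Fin d → ℂ)) ∈ colSpan d (A i) := by
        rw [← hiw]
        exact Submodule.mem_map_of_mem ((mem_colSpan_iff _ _).mpr rfl)
      rw [hsplit (A i y) y, mem_colSpan_iff] at hmem
      rw [hDC (A i y)] at hmem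
      simp only [Prod.fst, Prod.snd] at hmem
      -- hmem : A i (Cl y) = -Cl (A i y) + Cl y
      rw [hmem]
      abel
    have hinj : Function.Injective Cl := by
      intro a b hab
      have h1' : P (0, a - b) = 0 := by
        rw [hC, map_sub Cl, hab, sub_self]; rfl
      have h2' : ((0, a - b) : (Fin d → ℂ) × (Fin d → ℂ)) = 0 := by
        apply P.injective; rw [h1', map_zero]
      have := congrArg Prod.snd h2'
      simpa [sub_eq_zero] using this
    have hsurj : Function.Surjective Cl := by
      intro w
      have : ((w, w) : (Fin d → ℂ) × (Fin d → ℂ)) ∈ colSpan d 1 := by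
        rw [mem_colSpan_iff]; rfl
      rw [← h1] at this
      obtain ⟨v, hv, hPv⟩ := this
      obtain ⟨y, rfl⟩ := hv
      refine ⟨y, ?_⟩
      have : P (0, y) = (w, w) := hPv
      rw [hC] at this
      exact (congrArg Prod.snd this)
    exact ⟨LinearEquiv.ofBijective Cl ⟨hinj, hsurj⟩, fun v => hZrel v⟩
  obtain ⟨Y, hY⟩ := partA
  obtain ⟨Z, hZ⟩ := partB
  refine ⟨⟨Y, hY⟩, ⟨Z, hZ⟩, ?_, ?_⟩
  · -- inverse part
    have hfg : A i * (Y.conj (A i)) = 1 := by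
      refine LinearMap.ext fun v => ?_
      rw [Module.End.mul_apply, LinearEquiv.conj_apply_apply, hY (Y.symm v),
        LinearEquiv.apply_symm_apply, Module.End.one_apply]
    exact roots_inv_aux (A i) (Y.conj (A i)) hfg (Y.charpoly_conj (A i))
  · have h1f : (1 : Module.End ℂ (Fin d → ℂ)) - A i = Z.conj (A i) := by
      refine LinearMap.ext fun v => ?_
      rw [LinearEquiv.conj_apply_apply, hZ (Z.symm v), LinearEquiv.apply_symm_apply,
        LinearMap.sub_apply, Module.End.one_apply]
    exact roots_one_sub_aux (A i) (by rw [h1f, Z.charpoly_conj (A i)])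
end
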